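/- arXiv:2302.12016 — 4 statements merged into one kernel-verified Lean document; each statement's English description precedes it below -/
import Mathlib

section
/- Let (X,d) and (Y,∂) be metric spaces and let f : X → Y and g : Y → X be coarse Lipschitz maps with g∘f ∼_∞ Id_X. Then for each x0 ∈ X and each θ > 0 there exists L > 0 such that for all x, x' ∈ X: if d(x,x') > θ·max{d(x,x0), d(x',x0)}, then ∂(f(x),f(x')) ≥ (1/L)·d(x,x') − L. -/
/-- A map between (pseudo)metric spaces is coarse Lipschitz if there is `L > 0` with
`∂(f x, f x') ≤ L · d(x, x') + L` for all `x, x'`. -/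
def CoarseLipschitz {X Y : Type*} [PseudoMetricSpace X] [PseudoMetricSpace Y]
    (f : X → Y) : Prop :=
  ∃ L > (0 : ℝ), ∀ x x' : X, dist (f x) (f x') ≤ L * dist x x' + L

/-- Maps `f g : X → Y` are asymptotically close, `f ∼_∞ g`, if either `X` is bounded, or
for some basepoint `x0`: for every `ε > 0` there is `R > 0` such that
`∂(f x, g x) ≤ ε · d(x, x0)` whenever `d(x, x0) ≥ R`. -/
def AsympClose {X Y : Type*} [PseudoMetricSpace X] [PseudoMetricSpace Y]
    (f g : X → Y) : Prop :=
  Bornology.IsBounded (Set.univ : Set X) ∨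
    ∃ x0 : X, ∀ ε > (0 : ℝ), ∃ R > (0 : ℝ), ∀ x : X,
      R ≤ dist x x0 → dist (f x) (g x) ≤ ε * dist x x0

/-- `f : X → Y` is an asymptotic coarse Lipschitz equivalence with asymptotic coarse
Lipschitz inverse `g : Y → X` if `f` and `g` are coarse Lipschitz, `g ∘ f ∼_∞ Id_X` and
`f ∘ g ∼_∞ Id_Y`. -/
def AsympCLInverse {X Y : Type*} [PseudoMetricSpace X] [PseudoMetricSpace Y]
    (f : X → Y) (g : Y → X) : Prop :=
  CoarseLipschitz f ∧ CoarseLipschitz g ∧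
    AsympClose (g ∘ f) id ∧ AsympClose (f ∘ g) id

/-- `f` is an asymptotic coarse Lipschitz equivalence if it admits an asymptotic coarse
Lipschitz inverse. -/
def IsAsympCLEquiv {X Y : Type*} [PseudoMetricSpace X] [PseudoMetricSpace Y]
    (f : X → Y) : Prop :=
  ∃ g : Y → X, AsympCLInverse f g

/-- Metric spaces `X` and `Y` are asymptotically coarse Lipschitz equivalent. -/
def AsympCLEquivalent (X Y : Type*) [PseudoMetricSpace X] [PseudoMetricSpace Y] : Prop :=
  ∃ f : X → Y, IsAsympCLEquiv f


/-!
Since `g ∘ f` is coarse Lipschitz and asymptotically close to the identity, for every `ε > 0`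
the defect `d(g (f x), x)` is at most `ε · d(x, x0) + M`. Going from `x` to `x'` through
`g (f x)` and `g (f x')` then gives
`d(x, x') ≤ ε (d(x, x0) + d(x', x0)) + 2M + L_g ∂(f x, f x') + L_g`,
and in the cone `d(x, x') > θ · max (d(x, x0), d(x', x0))` the choice `ε = θ / 4` lets the left
side absorb the first term.
-/

namespace CoarseLipschitz

variable {X Y Z : Type*} [PseudoMetricSpace X] [PseudoMetricSpace Y] [PseudoMetricSpace Z]

protected theorem id : CoarseLipschitz (id : X → X) :=
  ⟨1, one_pos, fun x x' => by simp⟩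

theorem comp {g : Y → Z} {f : X → Y} (hg : CoarseLipschitz g) (hf : CoarseLipschitz f) :
    CoarseLipschitz (g ∘ f) := by
  obtain ⟨Lg, hLg, hgL⟩ := hg
  obtain ⟨Lf, hLf, hfL⟩ := hf
  refine ⟨Lg * Lf + Lg, by positivity, fun x x' => ?_⟩
  calc dist (g (f x)) (g (f x')) ≤ Lg * dist (f x) (f x') + Lg := hgL _ _
    _ ≤ Lg * (Lf * dist x x' + Lf) + Lg := by gcongr; exact hfL _ _
    _ ≤ (Lg * Lf + Lg) * dist x x' + (Lg * Lf + Lg) := by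
        linarith [mul_nonneg hLg.le (dist_nonneg : 0 ≤ dist x x')]

theorem exists_dist_apply_le {f g : X → Y} (hf : CoarseLipschitz f) (hg : CoarseLipschitz g)
    (x0 : X) : ∃ K, 0 ≤ K ∧ ∀ x, dist (f x) (g x) ≤ K * dist x x0 + K := by
  obtain ⟨Lf, hLf, hfL⟩ := hf
  obtain ⟨Lg, hLg, hgL⟩ := hg
  set c := dist (f x0) (g x0)
  refine ⟨Lf + Lg + c, by positivity, fun x => ?_⟩
  have hcx : 0 ≤ c * dist x x0 := mul_nonneg dist_nonneg dist_nonneg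
  calc dist (f x) (g x) ≤ dist (f x) (f x0) + c + dist (g x0) (g x) := dist_triangle4 _ _ _ _
    _ ≤ (Lf * dist x x0 + Lf) + c + (Lg * dist x x0 + Lg) := by
        gcongr
        · exact hfL _ _
        · rw [dist_comm x]; exact hgL _ _
    _ ≤ (Lf + Lg + c) * dist x x0 + (Lf + Lg + c) := by linarith

end CoarseLipschitz

section

variable {X Y : Type*} [PseudoMetricSpace X] [PseudoMetricSpace Y]

theorem AsympClose.exists_dist_le {f g : X → Y} (hf : CoarseLipschitz f)
    (hg : CoarseLipschitz g) (hfg : AsympClose f g) (x0 : X) {ε : ℝ} (hε : 0 < ε) :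
    ∃ M, ∀ x, dist (f x) (g x) ≤ ε * dist x x0 + M := by
  rcases hfg with hbdd | ⟨x1, hclose⟩
  · obtain ⟨D, hD⟩ := Metric.isBounded_iff.mp hbdd
    obtain ⟨K, hK, hKf⟩ := hf.exists_dist_apply_le hg x0
    refine ⟨K * D + K, fun x => ?_⟩
    have hx : dist x x0 ≤ D := hD (Set.mem_univ x) (Set.mem_univ x0)
    have hεx : 0 ≤ ε * dist x x0 := by positivity
    linarith [hKf x, mul_le_mul_of_nonneg_left hx hK]
  · obtain ⟨K, hK, hKf⟩ := hf.exists_dist_apply_le hg x1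
    obtain ⟨R, hRpos, hR⟩ := hclose ε hε
    refine ⟨ε * dist x0 x1 + (K * R + K), fun x => ?_⟩
    have hbase : ε * dist x x1 ≤ ε * dist x x0 + ε * dist x0 x1 := by
      rw [← mul_add]; exact mul_le_mul_of_nonneg_left (dist_triangle _ _ _) hε.le
    rcases le_or_gt R (dist x x1) with hfar | hnear
    · have hKR : 0 ≤ K * R + K := by positivity
      linarith [hR x hfar]
    · have hεx : 0 ≤ ε * dist x x0 + ε * dist x0 x1 := by positivity
      linarith [hKf x, mul_le_mul_of_nonneg_left hnear.le hK]

theorem exists_dist_le_of_asympClose_comp_id {f : X → Y} {g : Y → X}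
    (hf : CoarseLipschitz f) (hg : CoarseLipschitz g) (hgf : AsympClose (g ∘ f) id)
    (x0 : X) {θ : ℝ} (hθ : 0 < θ) :
    ∃ L ≥ (1 : ℝ), ∀ x x' : X, θ * max (dist x x0) (dist x' x0) < dist x x' →
      dist x x' ≤ L * dist (f x) (f x') + L := by
  obtain ⟨M, hM⟩ := hgf.exists_dist_le (hg.comp hf) CoarseLipschitz.id x0 (ε := θ / 4)
    (by positivity)
  obtain ⟨Lg, hLg, hgL⟩ := hg
  set L := max (max (2 * Lg) (4 * M + 2 * Lg)) 1
  refine ⟨L, le_max_right _ _, fun x x' hcone => ?_⟩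
  have hx : θ * dist x x0 < dist x x' :=
    (mul_le_mul_of_nonneg_left (le_max_left _ _) hθ.le).trans_lt hcone
  have hx' : θ * dist x' x0 < dist x x' :=
    (mul_le_mul_of_nonneg_left (le_max_right _ _) hθ.le).trans_lt hcone
  have hdx := hM x
  have hdx' := hM x'
  simp only [Function.comp_apply, id_eq] at hdx hdx'
  rw [dist_comm] at hdx
  have habsorb : dist x x' ≤ 2 * Lg * dist (f x) (f x') + (4 * M + 2 * Lg) := by
    linarith [dist_triangle4 x (g (f x)) (g (f x')) x', hgL (f x) (f x')]
  have hL₁ : 2 * Lg ≤ L := (le_max_left _ _).trans (le_max_left _ _)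
  have hL₂ : 4 * M + 2 * Lg ≤ L := (le_max_right _ _).trans (le_max_left _ _)
  linarith [mul_le_mul_of_nonneg_right hL₁ (dist_nonneg : 0 ≤ dist (f x) (f x'))]

end

/-- If `f : X → Y` and `g : Y → X` are coarse Lipschitz with
`g ∘ f ∼_∞ Id_X`, then for each `x0 ∈ X` and `θ > 0` there is `L > 0` such that for all
`x, x'`: if `d(x,x') > θ·max{d(x,x0), d(x',x0)}` then `∂(f x, f x') ≥ d(x,x')/L − L`. -/
theorem asympCL_lower_bound {X Y : Type*} [MetricSpace X] [MetricSpace Y]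
    (f : X → Y) (g : Y → X) (hf : CoarseLipschitz f) (hg : CoarseLipschitz g)
    (hgf : AsympClose (g ∘ f) id) (x0 : X) (θ : ℝ) (hθ : 0 < θ) :
    ∃ L > (0 : ℝ), ∀ x x' : X,
      dist x x' > θ * max (dist x x0) (dist x' x0) →
      dist (f x) (f x') ≥ (1 / L) * dist x x' - L := by
  obtain ⟨L, hL, hbound⟩ := exists_dist_le_of_asympClose_comp_id hf hg hgf x0 hθ
  have hLpos : 0 < L := one_pos.trans_le hL
  refine ⟨L, hLpos, fun x x' hcone => ?_⟩
  have hdiv : 1 / L * dist x x' ≤ dist (f x) (f x') + 1 := by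
    rw [one_div, inv_mul_le_iff₀ hLpos]; linarith [hbound x x' hcone]
  linarith
end

section
/- There exist 1-Lipschitz maps f, g : ℝ → ℝ such that g∘f ∼_∞ Id_ℝ and f∘g ∼_∞ Id_ℝ (so f and g are asymptotic coarse Lipschitz equivalences of ℝ with itself), yet for every t > 0 the infimum of |g(x) − g(x')| over all x, x' ∈ ℝ with |x − x'| = t equals 0; in particular g is not a coarse Lipschitz embedding and is not almost uncollapsed. -/
/-!
Take `f = id` and `g x = x - D x`, where `D` is the sum of ramps rising with slope `1` across
the disjoint intervals `[16 ^ n, 16 ^ n + 2 ^ n]`. As `D` is nondecreasing with slope at most `1`,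
`g` is `1`-Lipschitz; `g` is constant on each of these intervals, whose lengths are unbounded, so
it identifies points at every distance; and `D x ≤ 2 √|x|`, so `g ∼_∞ id`.
-/

open Filter

section Collapse

variable {X Y : Type*} [PseudoMetricSpace X]

def CollapsesEveryDistance (g : X → Y) : Prop :=
  ∀ t > (0 : ℝ), ∃ x x' : X, dist x x' = t ∧ g x = g x'

variable [PseudoMetricSpace Y] {g : X → Y}

theorem CollapsesEveryDistance.sInf_dist_eq_zero (hg : CollapsesEveryDistance g) {t : ℝ}
    (ht : 0 < t) : sInf {d : ℝ | ∃ x x' : X, dist x x' = t ∧ d = dist (g x) (g x')} = 0 := by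
  obtain ⟨x, x', hxx', hgx⟩ := hg t ht
  refine IsLeast.csInf_eq ⟨⟨x, x', hxx', by rw [hgx, dist_self]⟩, ?_⟩
  rintro d ⟨y, y', -, rfl⟩
  exact dist_nonneg

theorem CollapsesEveryDistance.not_dist_ge (hg : CollapsesEveryDistance g) :
    ¬ ∃ L > (0 : ℝ), ∀ x x' : X, dist (g x) (g x') ≥ dist x x' / L - L := by
  rintro ⟨L, hL, h⟩
  obtain ⟨x, x', hxx', hgx⟩ := hg (2 * L ^ 2) (by positivity)
  have := h x x'
  rw [hgx, dist_self, hxx', show 2 * L ^ 2 / L = 2 * L by field_simp] at this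
  linarith

theorem CollapsesEveryDistance.not_almostUncollapsed (hg : CollapsesEveryDistance g) :
    ¬ ∃ t > (0 : ℝ), ∃ c > (0 : ℝ), ∀ x x' : X, dist x x' = t → c ≤ dist (g x) (g x') := by
  rintro ⟨t, ht, c, hc, h⟩
  obtain ⟨x, x', hxx', hgx⟩ := hg t ht
  have := h x x' hxx'
  rw [hgx, dist_self] at this
  linarith

end Collapse

theorem asympClose_id_of_dist_le_sqrt {f : ℝ → ℝ} (C : ℝ) (hf : ∀ x, dist (f x) x ≤ C * √|x|) :
    AsympClose f id := by
  refine Or.inr ⟨0, fun ε hε => ⟨(C / ε) ^ 2 + 1, by positivity, fun x hx => ?_⟩⟩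
  rw [Real.dist_eq, sub_zero] at hx
  rw [Real.dist_eq x 0, sub_zero]
  have hroot : C / ε ≤ √|x| := (le_abs_self _).trans (Real.abs_le_sqrt (by linarith))
  have hC : C ≤ ε * √|x| := by rwa [div_le_iff₀ hε, mul_comm] at hroot
  calc dist (f x) (id x) ≤ C * √|x| := hf x
    _ ≤ ε * √|x| * √|x| := mul_le_mul_of_nonneg_right hC (Real.sqrt_nonneg _)
    _ = ε * |x| := by rw [mul_assoc, Real.mul_self_sqrt (abs_nonneg x)]

noncomputable section

/-- `ramp a ℓ x` is the length of `[a, a + ℓ] ∩ (-∞, x]`. -/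
def ramp (a ℓ x : ℝ) : ℝ := min (max (x - a) 0) ℓ

section Ramp

variable {a ℓ x y : ℝ}

theorem ramp_nonneg (hℓ : 0 ≤ ℓ) : 0 ≤ ramp a ℓ x :=
  le_min (le_max_right _ _) hℓ

theorem ramp_le : ramp a ℓ x ≤ ℓ := min_le_right _ _

theorem ramp_eq_zero_of_le (hℓ : 0 ≤ ℓ) (h : x ≤ a) : ramp a ℓ x = 0 := by
  rw [ramp, max_eq_right (by linarith), min_eq_left hℓ]

theorem ramp_self_add {t : ℝ} (ht : 0 ≤ t) (htℓ : t ≤ ℓ) : ramp a ℓ (a + t) = t := by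
  rw [ramp, add_sub_cancel_left, max_eq_left ht, min_eq_left htℓ]

theorem ramp_mono : Monotone (ramp a ℓ) := fun _ _ h =>
  min_le_min_right _ (max_le_max_right _ (sub_le_sub_right h _))

/-- The increment of the ramp is bounded by that of `z ↦ min (max z x) y` over `[a, b]`; summed
over consecutive disjoint intervals, these bounds telescope to `y - x`. -/
theorem ramp_sub_ramp_le {b : ℝ} (hℓ : 0 ≤ ℓ) (hab : a + ℓ ≤ b) (hxy : x ≤ y) :
    ramp a ℓ y - ramp a ℓ x ≤ min (max b x) y - min (max a x) y := by
  simp only [ramp, min_def, max_def]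
  split_ifs <;> linarith

end Ramp

def rampSum (a ℓ : ℕ → ℝ) (x : ℝ) : ℝ := ∑' n, ramp (a n) (ℓ n) x

section RampSum

variable {a ℓ : ℕ → ℝ}

theorem summable_ramp (hℓ : ∀ n, 0 ≤ ℓ n) (ha : Tendsto a atTop atTop) (x : ℝ) :
    Summable fun n => ramp (a n) (ℓ n) x := by
  obtain ⟨N, hN⟩ := eventually_atTop.1 (ha.eventually_ge_atTop x)
  refine summable_of_ne_finset_zero (s := Finset.range N) fun n hn =>
    ramp_eq_zero_of_le (hℓ n) (hN n ?_)
  simpa using hn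

theorem rampSum_sub_rampSum (hℓ : ∀ n, 0 ≤ ℓ n) (ha : Tendsto a atTop atTop) (x y : ℝ) :
    rampSum a ℓ y - rampSum a ℓ x = ∑' n, (ramp (a n) (ℓ n) y - ramp (a n) (ℓ n) x) :=
  ((summable_ramp hℓ ha y).tsum_sub (summable_ramp hℓ ha x)).symm

theorem rampSum_mono (hℓ : ∀ n, 0 ≤ ℓ n) (ha : Tendsto a atTop atTop) : Monotone (rampSum a ℓ) :=
  fun _ _ h => (summable_ramp hℓ ha _).tsum_mono (summable_ramp hℓ ha _) fun _ => ramp_mono h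

theorem rampSum_le_add (hℓ : ∀ n, 0 ≤ ℓ n) (ha : Tendsto a atTop atTop)
    (hgap : ∀ n, a n + ℓ n ≤ a (n + 1)) {x y : ℝ} (hxy : x ≤ y) :
    rampSum a ℓ y ≤ rampSum a ℓ x + (y - x) := by
  have hsum : Summable fun n => ramp (a n) (ℓ n) y - ramp (a n) (ℓ n) x :=
    (summable_ramp hℓ ha y).sub (summable_ramp hℓ ha x)
  have hinc : ∀ n, 0 ≤ ramp (a n) (ℓ n) y - ramp (a n) (ℓ n) x := fun n =>
    sub_nonneg.2 (ramp_mono hxy)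
  suffices ∑' n, (ramp (a n) (ℓ n) y - ramp (a n) (ℓ n) x) ≤ y - x by
    linarith [rampSum_sub_rampSum hℓ ha x y]
  refine hsum.tsum_le_of_sum_le fun s => ?_
  obtain ⟨N, hN⟩ := s.exists_nat_subset_range
  set c : ℕ → ℝ := fun n => min (max (a n) x) y
  calc ∑ n ∈ s, (ramp (a n) (ℓ n) y - ramp (a n) (ℓ n) x)
      ≤ ∑ n ∈ Finset.range N, (ramp (a n) (ℓ n) y - ramp (a n) (ℓ n) x) :=
        Finset.sum_le_sum_of_subset_of_nonneg hN fun n _ _ => hinc n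
    _ ≤ ∑ n ∈ Finset.range N, (c (n + 1) - c n) :=
        Finset.sum_le_sum fun n _ => ramp_sub_ramp_le (hℓ n) (hgap n) hxy
    _ = c N - c 0 := Finset.sum_range_sub c N
    _ ≤ y - x := sub_le_sub (min_le_right _ _) (le_min (le_max_right _ _) hxy)

theorem rampSum_self_add (hℓ : ∀ n, 0 ≤ ℓ n) (ha : Tendsto a atTop atTop)
    (hgap : ∀ n, a n + ℓ n ≤ a (n + 1)) (n : ℕ) {t : ℝ} (ht : 0 ≤ t) (htℓ : t ≤ ℓ n) :
    rampSum a ℓ (a n + t) = rampSum a ℓ (a n) + t := by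
  have hlow : t ≤ rampSum a ℓ (a n + t) - rampSum a ℓ (a n) := by
    rw [rampSum_sub_rampSum hℓ ha]
    calc t = ramp (a n) (ℓ n) (a n + t) - ramp (a n) (ℓ n) (a n) := by
          rw [ramp_self_add ht htℓ, ramp_eq_zero_of_le (hℓ n) le_rfl, sub_zero]
      _ ≤ _ := ((summable_ramp hℓ ha _).sub (summable_ramp hℓ ha _)).le_tsum n
          fun m _ => sub_nonneg.2 (ramp_mono (le_add_of_nonneg_right ht))
  linarith [rampSum_le_add hℓ ha hgap (le_add_of_nonneg_right ht : a n ≤ a n + t)]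

def flattenedId (a ℓ : ℕ → ℝ) (x : ℝ) : ℝ := x - rampSum a ℓ x

theorem lipschitzWith_one_flattenedId (hℓ : ∀ n, 0 ≤ ℓ n) (ha : Tendsto a atTop atTop)
    (hgap : ∀ n, a n + ℓ n ≤ a (n + 1)) : LipschitzWith 1 (flattenedId a ℓ) := by
  refine LipschitzWith.of_dist_le_mul fun x y => ?_
  wlog hxy : x ≤ y generalizing x y
  · rw [dist_comm, dist_comm x]; exact this y x (le_of_not_ge hxy)
  have hmono := rampSum_mono hℓ ha hxy
  have hlip := rampSum_le_add hℓ ha hgap hxy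
  rw [Real.dist_eq, Real.dist_eq, abs_sub_comm, abs_of_nonpos (sub_nonpos.2 hxy), flattenedId,
    flattenedId, NNReal.coe_one, one_mul, abs_le]
  constructor <;> linarith

theorem flattenedId_self_add (hℓ : ∀ n, 0 ≤ ℓ n) (ha : Tendsto a atTop atTop)
    (hgap : ∀ n, a n + ℓ n ≤ a (n + 1)) (n : ℕ) {t : ℝ} (ht : 0 ≤ t) (htℓ : t ≤ ℓ n) :
    flattenedId a ℓ (a n + t) = flattenedId a ℓ (a n) := by
  rw [flattenedId, flattenedId, rampSum_self_add hℓ ha hgap n ht htℓ]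
  ring

end RampSum

theorem collapsesEveryDistance_flattenedId {a ℓ : ℕ → ℝ} (hℓ : ∀ n, 0 ≤ ℓ n)
    (ha : Tendsto a atTop atTop) (hgap : ∀ n, a n + ℓ n ≤ a (n + 1))
    (hℓ_unbounded : ∀ t, ∃ n, t ≤ ℓ n) : CollapsesEveryDistance (flattenedId a ℓ) := by
  intro t ht
  obtain ⟨n, hn⟩ := hℓ_unbounded t
  refine ⟨a n + t, a n, ?_, flattenedId_self_add hℓ ha hgap n ht.le hn⟩
  rw [Real.dist_eq, add_sub_cancel_left, abs_of_pos ht]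

def collapsingMap : ℝ → ℝ := flattenedId (16 ^ ·) (2 ^ ·)

theorem sixteen_pow_add_two_pow_le (n : ℕ) : (16 : ℝ) ^ n + 2 ^ n ≤ 16 ^ (n + 1) := by
  have : (2 : ℝ) ^ n ≤ 16 ^ n := pow_le_pow_left₀ (by norm_num) (by norm_num) n
  rw [pow_succ]
  linarith [pow_nonneg (by norm_num : (0 : ℝ) ≤ 16) n]

theorem tendsto_sixteen_pow : Tendsto (fun n : ℕ => (16 : ℝ) ^ n) atTop atTop :=
  tendsto_pow_atTop_atTop_of_one_lt (by norm_num)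

/-- The `n`-th ramp can be nonzero only for `16 ^ n < x`, where its height `2 ^ n` is
`2⁻ⁿ · √(16 ^ n) ≤ 2⁻ⁿ · √|x|`. -/
theorem ramp_sixteen_pow_le (n : ℕ) (x : ℝ) :
    ramp (16 ^ n) (2 ^ n) x ≤ (1 / 2) ^ n * √|x| := by
  rcases le_or_gt x (16 ^ n) with h | h
  · rw [ramp_eq_zero_of_le (by positivity) h]
    positivity
  · have hsqrt : (4 : ℝ) ^ n ≤ √|x| := by
      rw [← Real.sqrt_sq (by positivity : (0 : ℝ) ≤ 4 ^ n), ← pow_mul, mul_comm, pow_mul]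
      exact Real.sqrt_le_sqrt (by norm_num; linarith [le_abs_self x])
    calc ramp (16 ^ n) (2 ^ n) x ≤ 2 ^ n := ramp_le
      _ = (1 / 2) ^ n * 4 ^ n := by rw [← mul_pow]; norm_num
      _ ≤ (1 / 2) ^ n * √|x| := by gcongr

theorem dist_collapsingMap_le (x : ℝ) : dist (collapsingMap x) x ≤ 2 * √|x| := by
  have hD : rampSum (16 ^ ·) (2 ^ ·) x ≤ 2 * √|x| := by
    calc rampSum (16 ^ ·) (2 ^ ·) x ≤ ∑' n : ℕ, (1 / 2 : ℝ) ^ n * √|x| :=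
          (summable_ramp (fun n => by positivity) tendsto_sixteen_pow x).tsum_mono
            (summable_geometric_two.mul_right _) fun n => ramp_sixteen_pow_le n x
      _ = 2 * √|x| := by rw [tsum_mul_right, tsum_geometric_two]
  have hD0 : 0 ≤ rampSum (16 ^ ·) (2 ^ ·) x := tsum_nonneg fun n => ramp_nonneg (by positivity)
  rw [collapsingMap, flattenedId, Real.dist_eq, sub_sub_cancel_left, abs_neg, abs_of_nonneg hD0]
  exact hD

theorem lipschitzWith_one_collapsingMap : LipschitzWith 1 collapsingMap :=
  lipschitzWith_one_flattenedId (fun n => by positivity) tendsto_sixteen_pow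
    sixteen_pow_add_two_pow_le

theorem collapsesEveryDistance_collapsingMap : CollapsesEveryDistance collapsingMap :=
  collapsesEveryDistance_flattenedId (fun n => by positivity) tendsto_sixteen_pow
    sixteen_pow_add_two_pow_le fun t => (pow_unbounded_of_one_lt t one_lt_two).imp fun _ => le_of_lt

end

/-- There are 1-Lipschitz maps `f g : ℝ → ℝ` with `g ∘ f ∼_∞ Id` and
`f ∘ g ∼_∞ Id` (so they are asymptotic coarse Lipschitz equivalences of `ℝ`), yet for all
`t > 0` the infimum of `|g x − g x'|` over `|x − x'| = t` is `0`; in particular `g` is not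
a coarse Lipschitz embedding and not almost uncollapsed. -/
theorem exists_asympCLEquiv_real_collapsing :
    ∃ f g : ℝ → ℝ, LipschitzWith 1 f ∧ LipschitzWith 1 g ∧
      AsympClose (g ∘ f) id ∧ AsympClose (f ∘ g) id ∧
      (∀ t > (0 : ℝ), sInf {d : ℝ | ∃ x x' : ℝ, dist x x' = t ∧ d = dist (g x) (g x')} = 0) ∧
      ¬ (CoarseLipschitz g ∧
          ∃ L > (0 : ℝ), ∀ x x' : ℝ, dist (g x) (g x') ≥ dist x x' / L - L) ∧
      ¬ (∃ t > (0 : ℝ), ∃ c > (0 : ℝ), ∀ x x' : ℝ, dist x x' = t → c ≤ dist (g x) (g x')) := by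
  have hclose : AsympClose collapsingMap id := asympClose_id_of_dist_le_sqrt 2 dist_collapsingMap_le
  have hcol := collapsesEveryDistance_collapsingMap
  exact ⟨id, collapsingMap, LipschitzWith.id, lipschitzWith_one_collapsingMap, hclose, hclose,
    fun _ ht => hcol.sInf_dist_eq_zero ht, fun h => hcol.not_dist_ge h.2,
    hcol.not_almostUncollapsed⟩
end

section
/- Let X and Y be real Banach spaces and let f : X → Y be an asymptotic coarse Lipschitz equivalence. Then the set ⋃_{n∈ℕ} (1/n)·f(X) is dense in Y. -/
/-! Since `f ∘ g` is asymptotically close to the identity, `dist (f (g v)) v = o(‖v‖)`, so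
`t⁻¹ • f (g (t • y)) → y` as `t → ∞` for every `y ≠ 0`. Hence every nonzero vector lies in the
closure of `⋃ₙ n⁻¹ • f(X)`, and the nonzero vectors are dense in a nontrivial real normed space. -/

open Filter Topology Asymptotics Bornology

theorem AsympClose.isLittleO_dist {X Y : Type*} [PseudoMetricSpace X] [PseudoMetricSpace Y]
    {f g : X → Y} (hfg : AsympClose f g) (hX : ¬IsBounded (Set.univ : Set X)) (x₁ : X) :
    (fun x => dist (f x) (g x)) =o[cobounded X] (fun x => dist x x₁) := by
  obtain ⟨x₀, hx₀⟩ := hfg.resolve_left hX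
  have h₀ : (fun x => dist (f x) (g x)) =o[cobounded X] (fun x => dist x x₀) := by
    refine IsLittleO.of_bound fun ε hε => ?_
    obtain ⟨R, -, hR⟩ := hx₀ ε hε
    filter_upwards [(Metric.tendsto_dist_right_cobounded_atTop x₀).eventually_ge_atTop R] with x hx
    simpa only [Real.norm_of_nonneg dist_nonneg] using hR x hx
  refine h₀.trans_isBigO (IsBigO.of_bound 2 ?_)
  filter_upwards [(Metric.tendsto_dist_right_cobounded_atTop x₁).eventually_ge_atTop (dist x₁ x₀)]
    with x hx
  simp only [Real.norm_of_nonneg dist_nonneg]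
  linarith [dist_triangle x x₁ x₀, dist_comm x₁ x₀]

theorem tendsto_smul_cobounded {E : Type*} [NormedAddCommGroup E] [NormedSpace ℝ E]
    {y : E} (hy : y ≠ 0) : Tendsto (fun t : ℝ => t • y) atTop (cobounded E) := by
  rw [← tendsto_norm_atTop_iff_cobounded]
  simp only [norm_smul]
  exact tendsto_norm_atTop_atTop.atTop_mul_const (norm_pos_iff.2 hy)

theorem AsympClose.tendsto_inv_smul_apply_smul {E : Type*} [NormedAddCommGroup E]
    [NormedSpace ℝ E] {h : E → E} (hh : AsympClose h id) (hE : ¬IsBounded (Set.univ : Set E))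
    {y : E} (hy : y ≠ 0) : Tendsto (fun t : ℝ => t⁻¹ • h (t • y)) atTop (𝓝 y) := by
  have hsmul : (fun t : ℝ => ‖t • y‖) =O[atTop] (fun t => t) := by
    refine IsBigO.of_bound ‖y‖ (Eventually.of_forall fun t => ?_)
    rw [norm_norm, norm_smul, mul_comm]
  have hlo : (fun t : ℝ => dist (h (t • y)) (t • y)) =o[atTop] (fun t => t) := by
    have := (hh.isLittleO_dist hE 0).comp_tendsto (tendsto_smul_cobounded hy)
    simp only [Function.comp_def, id, dist_zero_right] at this
    exact this.trans_isBigO hsmul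
  rw [tendsto_iff_dist_tendsto_zero]
  refine hlo.tendsto_div_nhds_zero.congr' ?_
  filter_upwards [eventually_gt_atTop 0] with t ht
  calc dist (h (t • y)) (t • y) / t
      = dist (t⁻¹ • h (t • y)) (t⁻¹ • (t • y)) := by
        rw [dist_smul₀, Real.norm_of_nonneg (inv_nonneg.2 ht.le), inv_mul_eq_div]
    _ = dist (t⁻¹ • h (t • y)) y := by rw [inv_smul_smul₀ ht.ne']

theorem asympCLEquiv_union_smul_range_dense_general {X Y : Type*}
    [NormedAddCommGroup X] [NormedAddCommGroup Y] [NormedSpace ℝ Y]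
    (f : X → Y) (hf : IsAsympCLEquiv f) :
    Dense (⋃ (n : ℕ) (_ : 0 < n), (fun y : Y => ((n : ℝ))⁻¹ • y) '' Set.range f) := by
  obtain ⟨g, -, -, -, hfg⟩ := hf
  set s := ⋃ (n : ℕ) (_ : 0 < n), (fun y : Y => ((n : ℝ))⁻¹ • y) '' Set.range f
  have mem_s : ∀ n : ℕ, 0 < n → ∀ x, ((n : ℝ))⁻¹ • f x ∈ s := fun n hn x =>
    Set.mem_iUnion₂.2 ⟨n, hn, f x, ⟨x, rfl⟩, rfl⟩
  rcases subsingleton_or_nontrivial Y with hY | hY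
  · rw [Subsingleton.eq_univ_of_nonempty ⟨_, mem_s 1 one_pos (g 0)⟩]
    exact dense_univ
  have compl_zero_subset : {0}ᶜ ⊆ closure s := fun y hy =>
    mem_closure_of_tendsto
      ((hfg.tendsto_inv_smul_apply_smul (NormedSpace.unbounded_univ ℝ Y) hy).comp
        tendsto_natCast_atTop_atTop)
      ((eventually_gt_atTop 0).mono fun n hn => mem_s n hn _)
  exact dense_closure.1 ((dense_compl_singleton 0).mono compl_zero_subset)

/-- If `f : X → Y` is an asymptotic coarse Lipschitz equivalence of real
Banach spaces, then `⋃_{n ≥ 1} (1/n)·f(X)` is dense in `Y`. -/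
theorem asympCLEquiv_union_smul_range_dense {X Y : Type*}
    [NormedAddCommGroup X] [NormedSpace ℝ X] [CompleteSpace X]
    [NormedAddCommGroup Y] [NormedSpace ℝ Y] [CompleteSpace Y]
    (f : X → Y) (hf : IsAsympCLEquiv f) :
    Dense (⋃ (n : ℕ) (_ : 0 < n), (fun y : Y => ((n : ℝ))⁻¹ • y) '' Set.range f) :=
  asympCLEquiv_union_smul_range_dense_general f hf
end

section
/- Let X and Y be real Banach spaces that are asymptotically coarse Lipschitz equivalent. If X is finite dimensional, then Y is finite dimensional and dim(X) = dim(Y). -/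
/-!
Far from a base point `y₀`, `f ∘ g` is within `δ ‖y - y₀‖` of the identity, so `g` cannot shrink
distances there by much. Rescaling a ball of radius `M` placed far out in `Y` to the unit ball,
`g` therefore maps `ε`-separated sets injectively onto `ε M / 4L`-separated sets in a ball of
radius `2 L' M` of `X`, and a volume count in `X` bounds their size by `(C / ε + 1) ^ dim X`.
The unit ball of a `k`-dimensional subspace of `Y` contains `ε`-separated sets of size `ε ^ (-k)`,
so every finite-dimensional subspace of `Y` has dimension at most `dim X`. By symmetry, `dim X`
is at most `dim Y` as well.
-/

open Metric MeasureTheory Module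
open scoped ENNReal NNReal

lemma isSeparated_iff_pairwise_lt_dist {E : Type*} [PseudoMetricSpace E] {ε : ℝ≥0} {s : Set E} :
    IsSeparated ε s ↔ s.Pairwise fun x y ↦ ε < dist x y := by
  simp only [IsSeparated, edist_nndist, ENNReal.coe_lt_coe, ← NNReal.coe_lt_coe, coe_nndist]

section FiniteDimensional

variable {E : Type*} [NormedAddCommGroup E] [NormedSpace ℝ E] [FiniteDimensional ℝ E]

lemma natCast_mul_addHaar_closedBall_le_iff [MeasurableSpace E] [BorelSpace E] (μ : Measure E)
    [μ.IsAddHaarMeasure] (a b : ℕ) (x y : E) {r R : ℝ} (hr : 0 ≤ r) (hR : 0 ≤ R) :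
    a * μ (closedBall x r) ≤ b * μ (closedBall y R) ↔
      a * r ^ finrank ℝ E ≤ b * R ^ finrank ℝ E := by
  rw [Measure.addHaar_closedBall μ x hr, Measure.addHaar_closedBall μ y hR, ← mul_assoc,
    ← mul_assoc, ENNReal.mul_le_mul_iff_left (measure_ball_pos μ 0 one_pos).ne'
      measure_ball_lt_top.ne, ← ENNReal.ofReal_natCast, ← ENNReal.ofReal_natCast b,
    ← ENNReal.ofReal_mul (by positivity), ← ENNReal.ofReal_mul (by positivity),
    ENNReal.ofReal_le_ofReal_iff (by positivity)]

/-- Balls of radius `ε / 2` around the points of `s` are disjoint and lie in a ball of radius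
`R + ε / 2`. -/
lemma Metric.IsSeparated.card_le_of_subset_closedBall {s : Finset E} {ε : ℝ≥0} (hε : 0 < ε)
    {c : E} {R : ℝ} (hR : 0 ≤ R) (hs : (s : Set E) ⊆ closedBall c R)
    (hsep : IsSeparated ε (s : Set E)) :
    (s.card : ℝ) ≤ (2 * R / ε + 1) ^ finrank ℝ E := by
  borelize E
  let μ : Measure E := .addHaar
  have hε2 : (0 : ℝ) ≤ ε / 2 := by positivity
  have hdisj : (s : Set E).PairwiseDisjoint fun x ↦ closedBall x (ε / 2) := by
    intro x hx y hy hxy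
    apply closedBall_disjoint_closedBall
    linarith [isSeparated_iff_pairwise_lt_dist.1 hsep hx hy hxy]
  have hsub : (⋃ x ∈ s, closedBall x (ε / 2)) ⊆ closedBall c (R + ε / 2) :=
    Set.iUnion₂_subset fun x hx ↦
      closedBall_subset_closedBall' (by linarith [mem_closedBall.1 (hs hx)])
  have hmeas : s.card * μ (closedBall 0 (ε / 2)) ≤ (1 : ℕ) * μ (closedBall c (R + ε / 2)) := by
    calc s.card * μ (closedBall 0 (ε / 2))
        = ∑ x ∈ s, μ (closedBall x (ε / 2)) := by
          simp [Measure.addHaar_closedBall_center μ]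
      _ = μ (⋃ x ∈ s, closedBall x (ε / 2)) :=
          (measure_biUnion_finset hdisj fun x _ ↦ measurableSet_closedBall).symm
      _ ≤ (1 : ℕ) * μ (closedBall c (R + ε / 2)) := by
          rw [Nat.cast_one, one_mul]; exact measure_mono hsub
  rw [natCast_mul_addHaar_closedBall_le_iff μ _ _ _ _ hε2 (by positivity), Nat.cast_one,
    one_mul, ← le_div_iff₀ (by positivity), ← div_pow] at hmeas
  refine hmeas.trans_eq (congrArg (· ^ _) ?_)
  field_simp

lemma packingNumber_closedBall_ne_top {ε : ℝ≥0} (hε : 0 < ε) (c : E) {R : ℝ} (hR : 0 ≤ R) :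
    packingNumber ε (closedBall c R) ≠ ⊤ := by
  set N := ⌊(2 * R / ε + 1) ^ finrank ℝ E⌋₊
  refine ne_top_of_le_ne_top (ENat.natCast_ne_top N) ?_
  refine iSup₂_le fun C hC ↦ iSup_le fun hsep ↦ ?_
  by_contra! hlt
  obtain ⟨t, htC, ht⟩ :=
    Set.exists_subset_encard_eq (k := (N + 1 : ℕ)) (by exact_mod_cast Order.add_one_le_of_lt hlt)
  have htfin : t.Finite := Set.encard_ne_top_iff.1 (by simp [ht])
  have hcard := IsSeparated.card_le_of_subset_closedBall (s := htfin.toFinset) hε hR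
    (by simpa using htC.trans hC) (by simpa using hsep.subset htC)
  rw [← Set.ncard_eq_toFinset_card t htfin, Set.ncard_def, ht, ENat.toNat_natCast] at hcard
  push_cast at hcard
  linarith [Nat.lt_floor_add_one ((2 * R / ε + 1) ^ finrank ℝ E)]

/-- A maximal `ε`-separated subset of the ball is an `ε`-cover of it. -/
lemma exists_isSeparated_subset_closedBall_card_ge {ε : ℝ≥0} (hε : 0 < ε) (c : E) {R : ℝ}
    (hR : 0 ≤ R) :
    ∃ s : Finset E, (s : Set E) ⊆ closedBall c R ∧ IsSeparated ε (s : Set E) ∧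
      (R / ε) ^ finrank ℝ E ≤ s.card := by
  borelize E
  let μ : Measure E := .addHaar
  have hpack := packingNumber_closedBall_ne_top hε c hR
  have hfin : (maximalSeparatedSet ε (closedBall c R)).Finite := by
    rw [← Set.encard_ne_top_iff, encard_maximalSeparatedSet hpack]; exact hpack
  refine ⟨hfin.toFinset, by simpa using maximalSeparatedSet_subset,
    by simpa using isSeparated_maximalSeparatedSet, ?_⟩
  have hcover : closedBall c R ⊆ ⋃ x ∈ hfin.toFinset, closedBall x ε := by
    simpa using (isCover_maximalSeparatedSet hpack).subset_iUnion_closedBall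
  have hmeas : (1 : ℕ) * μ (closedBall c R) ≤ hfin.toFinset.card * μ (closedBall 0 ε) := by
    calc (1 : ℕ) * μ (closedBall c R) = μ (closedBall c R) := by rw [Nat.cast_one, one_mul]
      _ ≤ μ (⋃ x ∈ hfin.toFinset, closedBall x ε) := measure_mono hcover
      _ ≤ ∑ x ∈ hfin.toFinset, μ (closedBall x ε) := measure_biUnion_finset_le _ _
      _ = hfin.toFinset.card * μ (closedBall 0 ε) := by
          simp [Measure.addHaar_closedBall_center μ]
  rwa [natCast_mul_addHaar_closedBall_le_iff μ _ _ _ _ hR ε.coe_nonneg, Nat.cast_one, one_mul,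
    ← div_le_iff₀ (by positivity), ← div_pow] at hmeas

end FiniteDimensional

lemma dist_le_of_asympClose_comp {X Y : Type*} [PseudoMetricSpace X] [PseudoMetricSpace Y]
    {f : X → Y} {g : Y → X} {L : ℝ}
    (hf : ∀ x x', dist (f x) (f x') ≤ L * dist x x' + L) {y₀ : Y}
    (hfg : ∀ δ > (0 : ℝ), ∃ R > (0 : ℝ), ∀ y : Y,
      R ≤ dist y y₀ → dist ((f ∘ g) y) (id y) ≤ δ * dist y y₀)
    {δ : ℝ} (hδ : 0 < δ) :
    ∃ R > (0 : ℝ), ∀ y y' : Y, R ≤ dist y y₀ → R ≤ dist y' y₀ →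
      dist y y' ≤ L * dist (g y) (g y') + L + δ * (dist y y₀ + dist y' y₀) := by
  obtain ⟨R, hR, hclose⟩ := hfg δ hδ
  refine ⟨R, hR, fun y y' hy hy' ↦ ?_⟩
  have h := hclose y hy
  have h' := hclose y' hy'
  simp only [Function.comp_apply, id_eq] at h h'
  calc dist y y' ≤ dist (f (g y)) y + dist (f (g y)) (f (g y')) + dist (f (g y')) y' := by
        rw [dist_comm (f (g y)) y]; exact dist_triangle4 _ _ _ _
    _ ≤ L * dist (g y) (g y') + L + δ * (dist y y₀ + dist y' y₀) := by
        linarith [hf (g y) (g y')]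

section CoarseMaps

variable {Y : Type*} [NormedAddCommGroup Y] [NormedSpace ℝ Y]

lemma exists_rescaling_lt_dist {X : Type*} [PseudoMetricSpace X] [Nontrivial Y]
    {f : X → Y} {g : Y → X} {L : ℝ} (hL : 0 < L)
    (hf : ∀ x x', dist (f x) (f x') ≤ L * dist x x' + L) {y₀ : Y}
    (hfg : ∀ δ > (0 : ℝ), ∃ R > (0 : ℝ), ∀ y : Y,
      R ≤ dist y y₀ → dist ((f ∘ g) y) (id y) ≤ δ * dist y y₀)
    {ε : ℝ} (hε : 0 < ε) :
    ∃ c : Y, ∃ M ≥ (1 : ℝ), ∀ y ∈ closedBall (0 : Y) 1, ∀ y' ∈ closedBall (0 : Y) 1,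
      ε < dist y y' → ε * M / (4 * L) < dist (g (c + M • y)) (g (c + M • y')) := by
  obtain ⟨R, -, hR⟩ := dist_le_of_asympClose_comp hf hfg (δ := ε / 12) (by positivity)
  set M := max (max R 1) (4 * L / ε)
  have hM1 : 1 ≤ M := (le_max_right R 1).trans (le_max_left _ _)
  have hRM : R ≤ M := (le_max_left R 1).trans (le_max_left _ _)
  have hLM : 4 * L ≤ ε * M := (div_le_iff₀' hε).1 (le_max_right _ _)
  obtain ⟨v, hv⟩ := exists_norm_eq Y (c := 2 * M) (by positivity)
  refine ⟨y₀ + v, M, hM1, fun y hy y' hy' hyy' ↦ ?_⟩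
  have hdist : ∀ z ∈ closedBall (0 : Y) 1, M ≤ dist (y₀ + v + M • z) y₀ ∧
      dist (y₀ + v + M • z) y₀ ≤ 3 * M := by
    intro z hz
    have hMz : ‖M • z‖ ≤ M := by
      rw [norm_smul, Real.norm_of_nonneg (by positivity)]
      exact mul_le_of_le_one_right (by positivity) (mem_closedBall_zero_iff.1 hz)
    rw [dist_eq_norm, add_assoc, add_sub_cancel_left]
    constructor
    · linarith [norm_le_add_norm_add v (M • z)]
    · linarith [norm_add_le v (M • z)]
  have hscale : dist (y₀ + v + M • y) (y₀ + v + M • y') = M * dist y y' := by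
    rw [dist_add_left, dist_smul₀, Real.norm_of_nonneg (by positivity)]
  have key := hR _ _ ((hdist y hy).1.trans' hRM) ((hdist y' hy').1.trans' hRM)
  rw [hscale] at key
  rw [div_lt_iff₀ (by positivity)]
  nlinarith [(hdist y hy).2, (hdist y' hy').2]

theorem exists_card_le_of_isSeparated_subset_closedBall {X : Type*} [NormedAddCommGroup X]
    [NormedSpace ℝ X] [FiniteDimensional ℝ X] {f : X → Y} {g : Y → X}
    (hf : CoarseLipschitz f) (hg : CoarseLipschitz g) (hfg : AsympClose (f ∘ g) id) :
    ∃ C ≥ (0 : ℝ), ∀ ε : ℝ≥0, 0 < ε → ∀ s : Finset Y, (s : Set Y) ⊆ closedBall 0 1 →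
      IsSeparated ε (s : Set Y) → (s.card : ℝ) ≤ (C / ε + 1) ^ finrank ℝ X := by
  classical
  obtain ⟨L, hL, hfL⟩ := hf
  obtain ⟨L', hL', hgL⟩ := hg
  refine ⟨16 * L * L', by positivity, fun ε hε s hs hsep ↦ ?_⟩
  rcases subsingleton_or_nontrivial Y with hY | hY
  · calc (s.card : ℝ) ≤ 1 := by exact_mod_cast Finset.card_le_one_of_subsingleton s
      _ ≤ _ := one_le_pow₀ (le_add_of_nonneg_left (by positivity))
  obtain ⟨y₀, hy₀⟩ := hfg.resolve_left (NormedSpace.unbounded_univ ℝ Y)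
  obtain ⟨c, M, hM, hφ⟩ := exists_rescaling_lt_dist hL hfL hy₀ (ε := ε) (by positivity)
  let φ : Y → X := fun y ↦ g (c + M • y)
  have hφsep : ∀ y ∈ s, ∀ y' ∈ s, y ≠ y' → ε * M / (4 * L) < dist (φ y) (φ y') :=
    fun y hy y' hy' hne ↦
      hφ y (hs hy) y' (hs hy') (isSeparated_iff_pairwise_lt_dist.1 hsep hy hy' hne)
  have hinj : Set.InjOn φ s := fun y hy y' hy' h ↦ by
    by_contra hne
    have := hφsep y hy y' hy' hne
    rw [h, dist_self] at this
    exact this.not_ge (by positivity)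
  let d : ℝ≥0 := ⟨ε * M / (4 * L), by positivity⟩
  have hd : (d : ℝ) = ε * M / (4 * L) := rfl
  have himage_sep : IsSeparated d (s.image φ : Set X) := by
    rw [isSeparated_iff_pairwise_lt_dist, Finset.coe_image]
    rintro _ ⟨y, hy, rfl⟩ _ ⟨y', hy', rfl⟩ hne
    exact hφsep y hy y' hy' fun h ↦ hne (h ▸ rfl)
  have himage_ball : (s.image φ : Set X) ⊆ closedBall (g c) (2 * L' * M) := by
    rw [Finset.coe_image]
    rintro _ ⟨y, hy, rfl⟩
    have hy1 := mem_closedBall_zero_iff.1 (hs hy)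
    have hdist : dist (c + M • y) c ≤ M := by
      rw [dist_eq_norm, add_sub_cancel_left, norm_smul, Real.norm_of_nonneg (by positivity)]
      exact mul_le_of_le_one_right (by positivity) hy1
    rw [mem_closedBall]
    nlinarith [hgL (c + M • y) c]
  have hcard := himage_sep.card_le_of_subset_closedBall
    (by rw [← NNReal.coe_pos, hd]; positivity) (by positivity) himage_ball
  rw [Finset.card_image_of_injOn hinj] at hcard
  refine hcard.trans_eq (congrArg (· ^ _) ?_)
  rw [hd]
  field_simp
  ring

end CoarseMaps

lemma exists_pos_div_add_one_pow_lt_one_div_pow {C : ℝ} (hC : 0 ≤ C) {n k : ℕ} (hnk : n < k) :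
    ∃ ε > (0 : ℝ), (C / ε + 1) ^ n < (1 / ε) ^ k := by
  set t := (C + 1) ^ n + 1
  have ht : 1 ≤ t := by simp only [t]; linarith [pow_nonneg (by linarith : (0 : ℝ) ≤ C + 1) n]
  refine ⟨1 / t, by positivity, ?_⟩
  rw [div_div_eq_mul_div, div_one, one_div_one_div]
  calc (C * t + 1) ^ n ≤ ((C + 1) * t) ^ n := by gcongr; linarith
    _ = (C + 1) ^ n * t ^ n := mul_pow _ _ _
    _ < t * t ^ n := by gcongr; linarith
    _ = t ^ (n + 1) := (pow_succ' t n).symm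
    _ ≤ t ^ k := pow_le_pow_right₀ ht hnk

theorem rank_le_finrank_of_asympClose_comp {X Y : Type*} [NormedAddCommGroup X]
    [NormedSpace ℝ X] [FiniteDimensional ℝ X] [NormedAddCommGroup Y] [NormedSpace ℝ Y]
    {f : X → Y} {g : Y → X}
    (hf : CoarseLipschitz f) (hg : CoarseLipschitz g) (hfg : AsympClose (f ∘ g) id) :
    Module.rank ℝ Y ≤ finrank ℝ X := by
  classical
  obtain ⟨C, hC, hcard⟩ := exists_card_le_of_isSeparated_subset_closedBall hf hg hfg
  refine rank_le fun s hs ↦ ?_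
  let V := Submodule.span ℝ (s : Set Y)
  have hV : finrank ℝ V = s.card := finrank_span_finset_eq_card hs
  by_contra! hlt
  obtain ⟨ε, hε, hpow⟩ := exists_pos_div_add_one_pow_lt_one_div_pow hC (hV ▸ hlt)
  lift ε to ℝ≥0 using hε.le
  obtain ⟨t, ht, htsep, htcard⟩ :=
    exists_isSeparated_subset_closedBall_card_ge (E := V) (by exact_mod_cast hε) 0 zero_le_one
  have hsep : IsSeparated ε ((t.image (↑) : Finset Y) : Set Y) := by
    rw [Finset.coe_image]
    rintro _ ⟨x, hx, rfl⟩ _ ⟨y, hy, rfl⟩ hne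
    exact htsep hx hy (ne_of_apply_ne _ hne)
  have hball : ((t.image (↑) : Finset Y) : Set Y) ⊆ closedBall 0 1 := by
    rw [Finset.coe_image]
    rintro _ ⟨x, hx, rfl⟩
    simpa using ht hx
  have := hcard ε (by exact_mod_cast hε) _ hball hsep
  rw [Finset.card_image_of_injective _ Subtype.val_injective] at this
  linarith

theorem asympCLEquivalent_finiteDimensional_general {X Y : Type*}
    [NormedAddCommGroup X] [NormedSpace ℝ X]
    [NormedAddCommGroup Y] [NormedSpace ℝ Y]
    (h : AsympCLEquivalent X Y) (hX : FiniteDimensional ℝ X) :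
    FiniteDimensional ℝ Y ∧ Module.finrank ℝ X = Module.finrank ℝ Y := by
  obtain ⟨f, g, hf, hg, hgf, hfg⟩ := h
  have hYX := rank_le_finrank_of_asympClose_comp hf hg hfg
  have hY : FiniteDimensional ℝ Y :=
    Module.rank_lt_aleph0_iff.1 (hYX.trans_lt Cardinal.natCast_lt_aleph0)
  exact ⟨hY, le_antisymm (finrank_le_of_rank_le (rank_le_finrank_of_asympClose_comp hg hf hgf))
    (finrank_le_of_rank_le hYX)⟩

/-- If real Banach spaces `X` and `Y` are asymptotically coarse
Lipschitz equivalent and `X` is finite dimensional, then `Y` is finite dimensional and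
`dim X = dim Y`. -/
theorem asympCLEquivalent_finiteDimensional {X Y : Type*}
    [NormedAddCommGroup X] [NormedSpace ℝ X] [CompleteSpace X]
    [NormedAddCommGroup Y] [NormedSpace ℝ Y] [CompleteSpace Y]
    (h : AsympCLEquivalent X Y) (hX : FiniteDimensional ℝ X) :
    FiniteDimensional ℝ Y ∧ Module.finrank ℝ X = Module.finrank ℝ Y :=
  asympCLEquivalent_finiteDimensional_general h hX
end
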